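/- arXiv:1601.06274 — 7 statements merged into one kernel-verified Lean document; each statement's English description precedes it below -/
import Mathlib

section
/- (Monotonicity of the dual minorize-maximize step.) Let f, g be energy functions and λ⁰ a modular function, and define D¹(λ) = min over labelings x of (f(x) + ⟨λ, x⟩) and D²(λ) = min over labelings x of (g(x) − ⟨λ, x⟩). Let x⁰ minimize x ↦ f(x) + ⟨λ⁰, x⟩, and let f̲ be a modular minorant of f exact at x⁰ such that ⟨f̲, x⟩ + ⟨λ⁰, x⟩ ≥ D¹(λ⁰) for every labeling x. Then for λ¹ = −f̲ the dual objective does not decrease: D¹(λ¹) + D²(λ¹) ≥ D¹(λ⁰) + D²(λ⁰). -/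
/-!
Since `f̲ ≤ f`, `D¹(λ¹) = min (f - ⟨f̲, ·⟩) ≥ 0`; and for every labeling `y`, bounding `D¹(λ⁰)` by
`⟨f̲, y⟩ + ⟨λ⁰, y⟩` and `D²(λ⁰)` by `g y - ⟨λ⁰, y⟩` gives `D¹(λ⁰) + D²(λ⁰) ≤ g y + ⟨f̲, y⟩`,
whose minimum over `y` is `D²(λ¹)`.
-/

open Finset

namespace ModularDual

variable {V L : Type*} [Fintype V] [DecidableEq V] [Fintype L] [Nonempty L]

/-- `⟨λ, x⟩`. -/
def pairing (lam : V → L → ℝ) (x : V → L) : ℝ := ∑ i, lam i (x i)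

/-- `D¹(λ)` for the energy `f`. -/
noncomputable def minAddPairing (f : (V → L) → ℝ) (lam : V → L → ℝ) : ℝ :=
  univ.inf' univ_nonempty fun y => f y + pairing lam y

/-- `D²(λ)` for the energy `g`. -/
noncomputable def minSubPairing (g : (V → L) → ℝ) (lam : V → L → ℝ) : ℝ :=
  univ.inf' univ_nonempty fun y => g y - pairing lam y

omit [DecidableEq V] [Fintype L] [Nonempty L] in
theorem pairing_neg (lam : V → L → ℝ) (x : V → L) : pairing (-lam) x = -pairing lam x :=
  sum_neg_distrib _

theorem minSubPairing_le (g : (V → L) → ℝ) (lam : V → L → ℝ) (x : V → L) :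
    minSubPairing g lam ≤ g x - pairing lam x :=
  inf'_le _ (mem_univ x)

theorem minAddPairing_neg_nonneg {f : (V → L) → ℝ} {fl : V → L → ℝ}
    (hminor : ∀ x, pairing fl x ≤ f x) : 0 ≤ minAddPairing f (-fl) :=
  le_inf' _ _ fun y _ => by
    rw [pairing_neg]
    linarith [hminor y]

theorem minAddPairing_add_minSubPairing_le (f g : (V → L) → ℝ) {lam fl : V → L → ℝ}
    (hdom : ∀ x, minAddPairing f lam ≤ pairing fl x + pairing lam x) :
    minAddPairing f lam + minSubPairing g lam ≤ minSubPairing g (-fl) :=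
  le_inf' _ _ fun y _ => by
    rw [pairing_neg]
    linarith [hdom y, minSubPairing_le g lam y]

end ModularDual

open ModularDual in
theorem dual_mm_monotone_general {V L : Type*} [Fintype V] [DecidableEq V] [Fintype L]
    [Nonempty L]
    (f g : (V → L) → ℝ) (lam0 fl : V → L → ℝ)
    (hminor : ∀ x : V → L, ∑ i, fl i (x i) ≤ f x)
    (hdom : ∀ x : V → L,
      Finset.univ.inf' Finset.univ_nonempty (fun y : V → L => f y + ∑ i, lam0 i (y i)) ≤
        ∑ i, fl i (x i) + ∑ i, lam0 i (x i)) :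
    Finset.univ.inf' Finset.univ_nonempty
        (fun y : V → L => f y + ∑ i, lam0 i (y i)) +
      Finset.univ.inf' Finset.univ_nonempty
        (fun y : V → L => g y - ∑ i, lam0 i (y i)) ≤
      Finset.univ.inf' Finset.univ_nonempty
          (fun y : V → L => f y + ∑ i, (-fl i (y i))) +
        Finset.univ.inf' Finset.univ_nonempty
          (fun y : V → L => g y - ∑ i, (-fl i (y i))) := by
  change minAddPairing f lam0 + minSubPairing g lam0 ≤
    minAddPairing f (-fl) + minSubPairing g (-fl)
  linarith [minAddPairing_neg_nonneg hminor, minAddPairing_add_minSubPairing_le f g hdom]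

/-- Monotonicity of the dual minorize-maximize step: replacing `λ⁰` by
`λ¹ = −f̲` does not decrease the dual objective `D¹(λ) + D²(λ)`. -/
theorem dual_mm_monotone {V L : Type*} [Fintype V] [DecidableEq V] [Fintype L]
    [Nonempty V] [Nonempty L]
    (f g : (V → L) → ℝ) (lam0 fl : V → L → ℝ) (x0 : V → L)
    (hx0 : ∀ x : V → L, f x0 + ∑ i, lam0 i (x0 i) ≤ f x + ∑ i, lam0 i (x i))
    (hminor : ∀ x : V → L, ∑ i, fl i (x i) ≤ f x)
    (hexact : ∑ i, fl i (x0 i) = f x0)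
    (hdom : ∀ x : V → L,
      Finset.univ.inf' Finset.univ_nonempty (fun y : V → L => f y + ∑ i, lam0 i (y i)) ≤
        ∑ i, fl i (x i) + ∑ i, lam0 i (x i)) :
    Finset.univ.inf' Finset.univ_nonempty
        (fun y : V → L => f y + ∑ i, lam0 i (y i)) +
      Finset.univ.inf' Finset.univ_nonempty
        (fun y : V → L => g y - ∑ i, lam0 i (y i)) ≤
      Finset.univ.inf' Finset.univ_nonempty
          (fun y : V → L => f y + ∑ i, (-fl i (y i))) +
        Finset.univ.inf' Finset.univ_nonempty
          (fun y : V → L => g y - ∑ i, (-fl i (y i))) :=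
  dual_mm_monotone_general f g lam0 fl hminor hdom
end

section
/- Let f be an energy function and λ a maximal modular minorant of f, i.e. a modular minorant such that there exists no modular minorant λ' of f with λ' i s ≥ λ i s for all i ∈ V, s ∈ L and ⟨λ', x̂⟩ > ⟨λ, x̂⟩ for some labeling x̂. Then all min-marginals of f − λ are identically zero: for every node i ∈ V and every label s ∈ L, the minimum of f(x) − ⟨λ, x⟩ over labelings x with x i = s equals 0. -/
/-!
If the minimum of `f - λ` over the labelings with `x i = s` were some `ε > 0`, then raising the
single entry `λ i s` by `ε` would still give a modular minorant: labelings with `x i = s` gain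
exactly `ε`, all others gain nothing. It dominates `λ` and is strictly larger at the minimizer,
contradicting maximality. So that minimum, which exists because there are finitely many
labelings, is `0`.
-/

open Finset

section

variable {V L : Type*}

def IsModularMinorant [Fintype V] (f : (V → L) → ℝ) (lam : V → L → ℝ) : Prop :=
  ∀ x : V → L, ∑ i, lam i (x i) ≤ f x

variable [DecidableEq V] [DecidableEq L]

def singleEntry (i : V) (s : L) (ε : ℝ) : V → L → ℝ :=
  Pi.single i (Pi.single s ε)

lemma singleEntry_nonneg {ε : ℝ} (hε : 0 ≤ ε) (i : V) (s : L) : 0 ≤ singleEntry i s ε :=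
  Pi.single_nonneg.2 (Pi.single_nonneg.2 hε)

variable [Fintype V]

lemma sum_singleEntry_apply (i : V) (s : L) (ε : ℝ) (x : V → L) :
    ∑ j, singleEntry i s ε j (x j) = if x i = s then ε else 0 := by
  rw [Fintype.sum_eq_single i fun j hj => by simp [singleEntry, Pi.single_eq_of_ne hj]]
  simp [singleEntry, Pi.single_apply]

lemma sum_add_singleEntry_apply (lam : V → L → ℝ) (i : V) (s : L) (ε : ℝ) (x : V → L) :
    ∑ j, (lam + singleEntry i s ε) j (x j) = ∑ j, lam j (x j) + if x i = s then ε else 0 := by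
  simp only [Pi.add_apply, sum_add_distrib, sum_singleEntry_apply]

lemma IsModularMinorant.add_singleEntry {f : (V → L) → ℝ} {lam : V → L → ℝ}
    (h : IsModularMinorant f lam) {i : V} {s : L} {ε : ℝ}
    (hgap : ∀ x : V → L, x i = s → ε ≤ f x - ∑ j, lam j (x j)) :
    IsModularMinorant f (lam + singleEntry i s ε) := by
  intro x
  rw [sum_add_singleEntry_apply]
  by_cases hxi : x i = s
  · rw [if_pos hxi]
    linarith [hgap x hxi]
  · rw [if_neg hxi, add_zero]
    exact h x

end

theorem maximal_minorant_zero_minmarginals_general {V L : Type*} [Fintype V] [Fintype L]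
    (f : (V → L) → ℝ) (lam : V → L → ℝ)
    (hminor : ∀ x : V → L, ∑ i, lam i (x i) ≤ f x)
    (hmax : ¬ ∃ lam' : V → L → ℝ,
      (∀ x : V → L, ∑ i, lam' i (x i) ≤ f x) ∧
      (∀ i s, lam i s ≤ lam' i s) ∧
      (∃ xhat : V → L, ∑ i, lam i (xhat i) < ∑ i, lam' i (xhat i))) :
    ∀ (i : V) (s : L),
      IsLeast {y : ℝ | ∃ x : V → L, x i = s ∧ y = f x - ∑ j, lam j (x j)} 0 := by
  classical
  intro i s
  refine ⟨?_, fun y ⟨x, _, hy⟩ => hy ▸ sub_nonneg.2 (hminor x)⟩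
  obtain ⟨x₀, hx₀i : x₀ i = s, hx₀min⟩ := Set.exists_min_image {x : V → L | x i = s}
    (fun x => f x - ∑ j, lam j (x j)) (Set.toFinite _) ⟨fun _ => s, rfl⟩
  set ε := f x₀ - ∑ j, lam j (x₀ j)
  obtain hε | hε := (sub_nonneg.2 (hminor x₀) : 0 ≤ ε).lt_or_eq
  · refine absurd ⟨lam + singleEntry i s ε, ?_, ?_, x₀, ?_⟩ hmax
    · exact IsModularMinorant.add_singleEntry hminor hx₀min
    · exact fun j t => le_add_of_nonneg_right (singleEntry_nonneg hε.le i s j t)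
    · rw [sum_add_singleEntry_apply, if_pos hx₀i]
      linarith
  · exact ⟨x₀, hx₀i, hε⟩

/-- For a maximal modular minorant `λ` of `f`, all min-marginals of `f − λ` are
identically zero: for every node `i` and label `s`, the minimum of `f(x) − ⟨λ, x⟩` over
labelings `x` with `x i = s` equals `0`. -/
theorem maximal_minorant_zero_minmarginals {V L : Type*} [Fintype V] [Fintype L]
    [Nonempty V] [Nonempty L]
    (f : (V → L) → ℝ) (lam : V → L → ℝ)
    (hminor : ∀ x : V → L, ∑ i, lam i (x i) ≤ f x)
    (hmax : ¬ ∃ lam' : V → L → ℝ,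
      (∀ x : V → L, ∑ i, lam' i (x i) ≤ f x) ∧
      (∀ i s, lam i s ≤ lam' i s) ∧
      (∃ xhat : V → L, ∑ i, lam i (xhat i) < ∑ i, lam' i (xhat i))) :
    ∀ (i : V) (s : L),
      IsLeast {y : ℝ | ∃ x : V → L, x i = s ∧ y = f x - ∑ j, lam j (x j)} 0 :=
  maximal_minorant_zero_minmarginals_general f lam hminor hmax
end

section
/- (Min-marginal decomposition on a chain.) Let n ≥ 1, let L be a finite nonempty set, and let F(x) = ∑_{i=1}^{n} f_i(x_i) + ∑_{i=1}^{n−1} f_{i,i+1}(x_i, x_{i+1}) be a chain energy. Define left messages φ_1(s) = 0, φ_{i+1}(s) = min over t ∈ L of (φ_i(t) + f_i(t) + f_{i,i+1}(t, s)), and right messages ψ_n(s) = 0, ψ_i(s) = min over t ∈ L of (ψ_{i+1}(t) + f_{i+1}(t) + f_{i,i+1}(s, t)). Then for every node 1 ≤ i ≤ n and every label s ∈ L, the min-marginal of F at i and s satisfies: min over x : {1,…,n} → L with x_i = s of F(x) = f_i(s) + φ_i(s) + ψ_i(s). -/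
/-!
Cutting a labeling at node `i` splits the chain energy into a prefix part (unary terms of
nodes `1, …, i` and the edges among them) and a suffix part (unary terms of nodes
`i + 1, …, n` and the edges from node `i` on). The two parts share only the label `x i = s`,
so they can be minimised independently and the min-marginal is the sum of the two partial
minima. Each partial minimum satisfies the message recursion: appending one edge to a segment
whose energy does not see the new node reduces the minimum over the longer segment to a
minimum over the label of the old endpoint.
-/

open Finset

theorem isLeast_image_of_add_edge {ι L : Type*} [DecidableEq ι] {E E' : (ι → L) → ℝ}
    {a b : ι} (hab : a ≠ b) {m : L → ℝ} (hm : ∀ t, IsLeast (E '' {x | x a = t}) (m t))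
    (hE : ∀ x v, E (Function.update x b v) = E x) {g : L → L → ℝ}
    (hE' : ∀ x, E' x = E x + g (x a) (x b)) {s : L} {μ : ℝ}
    (hμ : IsLeast (Set.range fun t => m t + g t s) μ) :
    IsLeast (E' '' {x | x b = s}) μ := by
  obtain ⟨⟨t, rfl⟩, hμ_le⟩ := hμ
  refine ⟨?_, ?_⟩
  · obtain ⟨x, hxt, hx⟩ := (hm t).1
    refine ⟨Function.update x b s, by simp, ?_⟩
    rw [hE', hE, Function.update_self, Function.update_of_ne hab, hxt, hx]
  · rintro _ ⟨x, rfl, rfl⟩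
    rw [hE']
    exact (hμ_le ⟨x a, rfl⟩).trans (by linarith [(hm (x a)).2 ⟨x, rfl, rfl⟩])

theorem isLeast_image_add_of_glue {X : Type*} {C : Set X} {P S : X → ℝ} {a b : ℝ}
    (hP : IsLeast (P '' C) a) (hS : IsLeast (S '' C) b)
    (glue : ∀ x ∈ C, ∀ y ∈ C, ∃ z ∈ C, P z = P x ∧ S z = S y) :
    IsLeast ((fun x => P x + S x) '' C) (a + b) := by
  obtain ⟨⟨x, hx, rfl⟩, hP_le⟩ := hP
  obtain ⟨⟨y, hy, rfl⟩, hS_le⟩ := hS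
  refine ⟨?_, ?_⟩
  · obtain ⟨z, hz, hzx, hzy⟩ := glue x hx y hy
    exact ⟨z, hz, by simp only [hzx, hzy]⟩
  · rintro _ ⟨z, hz, rfl⟩
    exact add_le_add (hP_le ⟨z, hz, rfl⟩) (hS_le ⟨z, hz, rfl⟩)

theorem isLeast_range_of_eq_inf'_add_const {L : Type*} [Fintype L] [Nonempty L]
    (h : L → ℝ) (c : ℝ) {k : L → ℝ} {μ : ℝ} (hk : ∀ t, k t = h t + c)
    (hμ : μ = univ.inf' univ_nonempty h + c) : IsLeast (Set.range k) μ := by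
  obtain ⟨t, -, ht⟩ := exists_mem_eq_inf' univ_nonempty h
  refine ⟨⟨t, by rw [hk, hμ, ht]⟩, ?_⟩
  rintro _ ⟨u, rfl⟩
  rw [hk, hμ]
  exact add_le_add_left (inf'_le h (mem_univ u)) c

section ChainEnergy

variable {L : Type*} (f : ℕ → L → ℝ) (p : ℕ → L → L → ℝ)

def prefixEnergy (i : ℕ) (x : ℕ → L) : ℝ :=
  ∑ k ∈ Ioc 0 i, f k (x k) + ∑ k ∈ Ico 1 i, p k (x k) (x (k + 1))

def suffixEnergy (i n : ℕ) (x : ℕ → L) : ℝ :=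
  ∑ k ∈ Ioc i n, f k (x k) + ∑ k ∈ Ico i n, p k (x k) (x (k + 1))

theorem prefixEnergy_one (x : ℕ → L) : prefixEnergy f p 1 x = f 1 (x 1) := by
  simp [prefixEnergy]

theorem prefixEnergy_succ {i : ℕ} (hi : 1 ≤ i) (x : ℕ → L) :
    prefixEnergy f p (i + 1) x =
      prefixEnergy f p i x + (p i (x i) (x (i + 1)) + f (i + 1) (x (i + 1))) := by
  simp only [prefixEnergy, sum_Ioc_succ_top (Nat.zero_le i), sum_Ico_succ_top hi]
  ring

theorem suffixEnergy_self (n : ℕ) (x : ℕ → L) : suffixEnergy f p n n x = 0 := by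
  simp [suffixEnergy]

theorem suffixEnergy_of_lt {i n : ℕ} (hin : i < n) (x : ℕ → L) :
    suffixEnergy f p i n x =
      suffixEnergy f p (i + 1) n x + (f (i + 1) (x (i + 1)) + p i (x i) (x (i + 1))) := by
  rw [suffixEnergy, suffixEnergy, ← insert_Ioc_add_one_left_eq_Ioc hin,
    sum_insert (by simp), sum_eq_sum_Ico_succ_bot hin]
  ring

theorem prefixEnergy_add_suffixEnergy {i n : ℕ} (h1 : 1 ≤ i) (hin : i ≤ n) (x : ℕ → L) :
    prefixEnergy f p i x + suffixEnergy f p i n x = prefixEnergy f p n x := by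
  rw [prefixEnergy, suffixEnergy, prefixEnergy, ← sum_Ioc_consecutive _ (Nat.zero_le i) hin,
    ← sum_Ico_consecutive _ h1 hin]
  ring

theorem prefixEnergy_congr {i : ℕ} {x y : ℕ → L} (h : ∀ k ∈ Icc 1 i, x k = y k) :
    prefixEnergy f p i x = prefixEnergy f p i y := by
  unfold prefixEnergy
  congr 1 <;> refine sum_congr rfl fun k hk => ?_
  · simp only [mem_Ioc] at hk
    rw [h k (mem_Icc.2 ⟨by omega, by omega⟩)]
  · simp only [mem_Ico] at hk
    rw [h k (mem_Icc.2 ⟨by omega, by omega⟩), h (k + 1) (mem_Icc.2 ⟨by omega, by omega⟩)]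

theorem suffixEnergy_congr {i n : ℕ} {x y : ℕ → L} (h : ∀ k ∈ Icc i n, x k = y k) :
    suffixEnergy f p i n x = suffixEnergy f p i n y := by
  unfold suffixEnergy
  congr 1 <;> refine sum_congr rfl fun k hk => ?_
  · simp only [mem_Ioc] at hk
    rw [h k (mem_Icc.2 ⟨by omega, by omega⟩)]
  · simp only [mem_Ico] at hk
    rw [h k (mem_Icc.2 ⟨by omega, by omega⟩), h (k + 1) (mem_Icc.2 ⟨by omega, by omega⟩)]

theorem exists_prefixEnergy_eq_suffixEnergy_eq {i n : ℕ} {x y : ℕ → L} (hxy : x i = y i) :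
    ∃ z : ℕ → L, z i = x i ∧ prefixEnergy f p i z = prefixEnergy f p i x ∧
      suffixEnergy f p i n z = suffixEnergy f p i n y := by
  refine ⟨fun k => if k ≤ i then x k else y k, by simp, prefixEnergy_congr f p fun k hk => ?_,
    suffixEnergy_congr f p fun k hk => ?_⟩
  · simp [(mem_Icc.1 hk).2]
  · simp only [mem_Icc] at hk
    rcases hk.1.eq_or_lt with rfl | hlt
    · simpa using hxy
    · simp [hlt.not_ge]

theorem prefixEnergy_eq_sum_fin {n : ℕ} (x : Fin n → L) {e : ℕ → L}
    (he : ∀ j : Fin n, e (j + 1) = x j) :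
    prefixEnergy f p n e = (∑ j : Fin n, f (j.val + 1) (x j)) +
      ∑ j : Fin (n - 1), p (j.val + 1) (x ⟨j.val, Nat.lt_of_lt_pred j.isLt⟩)
            (x ⟨j.val + 1, Nat.add_lt_of_lt_sub j.isLt⟩) := by
  rw [prefixEnergy, ← Ico_add_one_add_one_eq_Ioc, sum_Ico_eq_sum_range, sum_Ico_eq_sum_range,
    zero_add, Nat.add_sub_cancel, ← Fin.sum_univ_eq_sum_range, ← Fin.sum_univ_eq_sum_range]
  congr 1 <;> refine sum_congr rfl fun j _ => ?_
  · rw [add_comm, he]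
  · rw [add_comm 1, he ⟨j, by omega⟩, he ⟨j + 1, by omega⟩]

theorem image_prefixEnergy_eq_setOf_fin {n i : ℕ} (h1 : 1 ≤ i) (hin : i ≤ n) (s : L) :
    prefixEnergy f p n '' {x | x i = s} =
      {y : ℝ | ∃ x : Fin n → L, x ⟨i - 1, Nat.sub_one_lt_of_le h1 hin⟩ = s ∧
        y = (∑ j : Fin n, f (j.val + 1) (x j)) +
          ∑ j : Fin (n - 1), p (j.val + 1) (x ⟨j.val, Nat.lt_of_lt_pred j.isLt⟩)
            (x ⟨j.val + 1, Nat.add_lt_of_lt_sub j.isLt⟩)} := by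
  ext y
  constructor
  · rintro ⟨e, rfl, rfl⟩
    exact ⟨fun j => e (j + 1), by simp [Nat.sub_add_cancel h1],
      prefixEnergy_eq_sum_fin f p _ fun j => rfl⟩
  · rintro ⟨x, rfl, rfl⟩
    exact ⟨fun k => if h : k - 1 < n then x ⟨k - 1, h⟩ else x ⟨i - 1, by omega⟩, by simp,
      prefixEnergy_eq_sum_fin f p x fun j => by simp⟩

end ChainEnergy

section Messages

variable {L : Type*} [Fintype L] [Nonempty L] {f : ℕ → L → ℝ} {p : ℕ → L → L → ℝ} {n : ℕ}

theorem isLeast_prefixEnergy {phi : ℕ → L → ℝ} (hphi1 : ∀ s : L, phi 1 s = 0)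
    (hphirec : ∀ i : ℕ, 1 ≤ i → i ≤ n - 1 → ∀ s : L,
      phi (i + 1) s = univ.inf' univ_nonempty fun t => phi i t + f i t + p i t s)
    {i : ℕ} (h1 : 1 ≤ i) (hin : i ≤ n) (s : L) :
    IsLeast (prefixEnergy f p i '' {x | x i = s}) (f i s + phi i s) := by
  induction i, h1 using Nat.le_induction generalizing s with
  | base =>
    refine ⟨⟨fun _ => s, rfl, by simp [prefixEnergy_one, hphi1]⟩, ?_⟩
    rintro _ ⟨x, rfl, rfl⟩
    simp [prefixEnergy_one, hphi1]
  | succ i h1 ih =>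
    have hmsg : IsLeast (Set.range fun t => f i t + phi i t + (p i t s + f (i + 1) s))
        (f (i + 1) s + phi (i + 1) s) :=
      isLeast_range_of_eq_inf'_add_const (fun t => phi i t + f i t + p i t s) (f (i + 1) s)
        (fun t => by ring) (by rw [hphirec i h1 (by omega) s, add_comm])
    refine isLeast_image_of_add_edge (b := i + 1) (g := fun t u => p i t u + f (i + 1) u)
      (by omega) (ih (by omega)) (fun x v => prefixEnergy_congr f p fun k hk => ?_)
      (prefixEnergy_succ f p h1) hmsg
    simp only [mem_Icc] at hk
    exact Function.update_of_ne (by omega : k ≠ i + 1) v x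

theorem isLeast_suffixEnergy {psi : ℕ → L → ℝ} (hpsin : ∀ s : L, psi n s = 0)
    (hpsirec : ∀ i : ℕ, 1 ≤ i → i ≤ n - 1 → ∀ s : L,
      psi i s = univ.inf' univ_nonempty fun t => psi (i + 1) t + f (i + 1) t + p i s t)
    {i : ℕ} (h1 : 1 ≤ i) (hin : i ≤ n) (s : L) :
    IsLeast (suffixEnergy f p i n '' {x | x i = s}) (psi i s) := by
  induction hin using Nat.decreasingInduction generalizing s with
  | self =>
    refine ⟨⟨fun _ => s, rfl, by simp [suffixEnergy_self, hpsin]⟩, ?_⟩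
    rintro _ ⟨x, rfl, rfl⟩
    simp [suffixEnergy_self, hpsin]
  | of_succ i hin ih =>
    have hmsg : IsLeast (Set.range fun t => psi (i + 1) t + (f (i + 1) t + p i s t)) (psi i s) :=
      isLeast_range_of_eq_inf'_add_const (fun t => psi (i + 1) t + f (i + 1) t + p i s t) 0
        (fun t => by ring) (by rw [hpsirec i h1 (by omega) s, add_zero])
    refine isLeast_image_of_add_edge (a := i + 1) (b := i) (g := fun u t => f (i + 1) u + p i t u)
      (by omega) (ih (by omega)) (fun x v => suffixEnergy_congr f p fun k hk => ?_)
      (suffixEnergy_of_lt f p hin) hmsg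
    simp only [mem_Icc] at hk
    exact Function.update_of_ne (by omega : k ≠ i) v x

end Messages

/-- Min-marginal decomposition on a chain.  Nodes are `1, …, n`
(a labeling is encoded as `x : Fin n → L`, with `x j = x_{j+1}`); the chain energy is
`F(x) = ∑_{i=1}^{n} f i (x_i) + ∑_{i=1}^{n−1} p i (x_i) (x_{i+1})`.  With left messages `φ`
(`φ 1 = 0`, `φ (i+1) s = min_t (φ i t + f i t + p i t s)`) and right messages `ψ`
(`ψ n = 0`, `ψ i s = min_t (ψ (i+1) t + f (i+1) t + p i s t)`), the min-marginal of `F` at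
node `i` and label `s`, i.e. the minimum of `F x` over `x` with `x_i = s`, equals
`f i s + φ i s + ψ i s`. -/
theorem min_marginal_decomposition {L : Type*} [Fintype L] [Nonempty L]
    (n : ℕ)
    (f : ℕ → L → ℝ) (p : ℕ → L → L → ℝ) (phi psi : ℕ → L → ℝ)
    (hphi1 : ∀ s : L, phi 1 s = 0)
    (hphirec : ∀ i : ℕ, 1 ≤ i → i ≤ n - 1 → ∀ s : L,
      phi (i + 1) s =
        Finset.univ.inf' Finset.univ_nonempty (fun t : L => phi i t + f i t + p i t s))
    (hpsin : ∀ s : L, psi n s = 0)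
    (hpsirec : ∀ i : ℕ, 1 ≤ i → i ≤ n - 1 → ∀ s : L,
      psi i s =
        Finset.univ.inf' Finset.univ_nonempty
          (fun t : L => psi (i + 1) t + f (i + 1) t + p i s t)) :
    ∀ (i : ℕ) (h1 : 1 ≤ i) (hi : i ≤ n) (s : L),
      IsLeast
        {y : ℝ | ∃ x : Fin n → L, x ⟨i - 1, by omega⟩ = s ∧
          y = (∑ j : Fin n, f (j.val + 1) (x j)) +
              (∑ j : Fin (n - 1), p (j.val + 1) (x ⟨j.val, by omega⟩) (x ⟨j.val + 1, by omega⟩))}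
        (f i s + phi i s + psi i s) := by
  intro i h1 hi s
  rw [← image_prefixEnergy_eq_setOf_fin f p h1 hi s,
    ← Set.image_congr fun x _ => prefixEnergy_add_suffixEnergy f p h1 hi x]
  refine isLeast_image_add_of_glue (isLeast_prefixEnergy hphi1 hphirec h1 hi s)
    (isLeast_suffixEnergy hpsin hpsirec h1 hi s) fun x hx y hy => ?_
  obtain ⟨z, hz, hzx, hzy⟩ :=
    exists_prefixEnergy_eq_suffixEnergy_eq f p (n := n) (hx.trans hy.symm)
  exact ⟨z, hz.trans hx, hzx, hzy⟩
end

section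
/- (The TRW-S-type dual update equalizes min-marginals.) Let f, g be energy functions, λ a modular function, and i ∈ V a node. For a label s ∈ L write M^{f+λ}_i(s) for the minimum of f(x) + ⟨λ, x⟩ over labelings x with x i = s, and M^{g−λ}_i(s) for the minimum of g(x) − ⟨λ, x⟩ over such x. Define the updated modular function λ' by λ' j = λ j for j ≠ i and λ' i s = λ i s + (M^{g−λ}_i(s) − M^{f+λ}_i(s))/2. Then for every label s ∈ L, M^{f+λ'}_i(s) = M^{g−λ'}_i(s) = (M^{f+λ}_i(s) + M^{g−λ}_i(s))/2. -/
/-! On the labelings with `x i = s` the update changes `⟨λ, x⟩` only through the `i`-th term,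
i.e. by the constant `(M^{g−λ}_i(s) − M^{f+λ}_i(s))/2`. Hence the min-marginal of `f + λ` at `s`
rises by this constant and that of `g − λ` falls by it, and both land on the average. -/

open Finset

theorem Finset.sum_eq_sum_add_sub_of_eq_off {ι M : Type*} [Fintype ι] [AddCommGroup M]
    {a b : ι → M} {i : ι} (h : ∀ j, j ≠ i → a j = b j) :
    ∑ j, a j = ∑ j, b j + (a i - b i) := by
  have hdiff : ∑ j, (a j - b j) = a i - b i :=
    sum_eq_single_of_mem i (mem_univ i) fun j _ hj => by rw [h j hj, sub_self]
  rw [← hdiff, sum_sub_distrib, add_sub_cancel]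

theorem isLeast_setOf_eq_add_const {α β : Type*} [Add β] [Preorder β] [AddRightMono β]
    {p : α → Prop} {F G : α → β} {m c : β}
    (h : IsLeast {y | ∃ x, p x ∧ y = F x} m) (hG : ∀ x, p x → G x = F x + c) :
    IsLeast {y | ∃ x, p x ∧ y = G x} (m + c) := by
  obtain ⟨⟨x₀, hx₀, rfl⟩, hlow⟩ := h
  refine ⟨⟨x₀, hx₀, (hG x₀ hx₀).symm⟩, ?_⟩
  rintro y ⟨x, hx, rfl⟩
  rw [hG x hx]
  exact add_le_add_left (hlow ⟨x, hx, rfl⟩) c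

theorem trws_update_equalizes_minmarginals_general {V L : Type*} [Fintype V]
    (f g : (V → L) → ℝ) (lam lam' : V → L → ℝ) (i : V) (Mf Mg : L → ℝ)
    (hMf : ∀ s : L,
      IsLeast {y : ℝ | ∃ x : V → L, x i = s ∧ y = f x + ∑ j, lam j (x j)} (Mf s))
    (hMg : ∀ s : L,
      IsLeast {y : ℝ | ∃ x : V → L, x i = s ∧ y = g x - ∑ j, lam j (x j)} (Mg s))
    (hlam'_ne : ∀ j : V, j ≠ i → lam' j = lam j)
    (hlam'_i : ∀ s : L, lam' i s = lam i s + (Mg s - Mf s) / 2) :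
    ∀ s : L,
      IsLeast {y : ℝ | ∃ x : V → L, x i = s ∧ y = f x + ∑ j, lam' j (x j)}
        ((Mf s + Mg s) / 2) ∧
      IsLeast {y : ℝ | ∃ x : V → L, x i = s ∧ y = g x - ∑ j, lam' j (x j)}
        ((Mf s + Mg s) / 2) := by
  intro s
  have hsum : ∀ x : V → L, x i = s →
      ∑ j, lam' j (x j) = ∑ j, lam j (x j) + (Mg s - Mf s) / 2 := by
    intro x hx
    rw [sum_eq_sum_add_sub_of_eq_off (fun j hj => by rw [hlam'_ne j hj]), hx, hlam'_i s,
      add_sub_cancel_left]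
  constructor
  · have h := isLeast_setOf_eq_add_const (G := fun x => f x + ∑ j, lam' j (x j)) (hMf s)
      (c := (Mg s - Mf s) / 2) (fun x hx => by rw [hsum x hx, add_assoc])
    rwa [show Mf s + (Mg s - Mf s) / 2 = (Mf s + Mg s) / 2 by ring] at h
  · have h := isLeast_setOf_eq_add_const (G := fun x => g x - ∑ j, lam' j (x j)) (hMg s)
      (c := -((Mg s - Mf s) / 2)) (fun x hx => by rw [hsum x hx]; ring)
    rwa [show Mg s + -((Mg s - Mf s) / 2) = (Mf s + Mg s) / 2 by ring] at h

/-- The TRW-S-type dual update at node `i` equalizes the min-marginals of the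
two slave problems: after the update `λ' i s = λ i s + (M^{g−λ}_i(s) − M^{f+λ}_i(s))/2`
(and `λ' j = λ j` for `j ≠ i`), both min-marginals at `i` equal
`(M^{f+λ}_i(s) + M^{g−λ}_i(s))/2`. -/
theorem trws_update_equalizes_minmarginals {V L : Type*} [Fintype V] [Fintype L]
    [Nonempty V] [Nonempty L]
    (f g : (V → L) → ℝ) (lam lam' : V → L → ℝ) (i : V) (Mf Mg : L → ℝ)
    (hMf : ∀ s : L,
      IsLeast {y : ℝ | ∃ x : V → L, x i = s ∧ y = f x + ∑ j, lam j (x j)} (Mf s))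
    (hMg : ∀ s : L,
      IsLeast {y : ℝ | ∃ x : V → L, x i = s ∧ y = g x - ∑ j, lam j (x j)} (Mg s))
    (hlam'_ne : ∀ j : V, j ≠ i → lam' j = lam j)
    (hlam'_i : ∀ s : L, lam' i s = lam i s + (Mg s - Mf s) / 2) :
    ∀ s : L,
      IsLeast {y : ℝ | ∃ x : V → L, x i = s ∧ y = f x + ∑ j, lam' j (x j)}
        ((Mf s + Mg s) / 2) ∧
      IsLeast {y : ℝ | ∃ x : V → L, x i = s ∧ y = g x - ∑ j, lam' j (x j)}
        ((Mf s + Mg s) / 2) :=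
  trws_update_equalizes_minmarginals_general f g lam lam' i Mf Mg hMf hMg hlam'_ne hlam'_i
end

section
/- (Difference-of-convex decomposition of the truncated penalty.) Let 0 ≤ ε ≤ 1, δ ≥ 0 and C ≥ ε·δ. Then for every t ∈ ℝ, r_{ε,δ}(t) − r_{0, C+δ−εδ}(t) = min(r_{ε,δ}(t), C). In particular the truncated penalty min(r_{ε,δ}, C) is a difference of two convex functions. -/
/-- The penalty function `r_{α,β}(t) = α|t|` if `|t| ≤ β`, and `|t| − β(1−α)` otherwise. -/
noncomputable def pen (α β t : ℝ) : ℝ := if |t| ≤ β then α * |t| else |t| - β * (1 - α)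

/-!
On `0 ≤ α ≤ 1` the penalty is the maximum of the two affine-in-`|t|` pieces
`α|t|` and `|t| - β(1 - α)`, hence convex. With `B = C + δ(1 - ε)` one has
`r_{0,B}(t) = max(0, |t| - B) = max(0, r_{ε,δ}(t) - C)`: the second branch of `r_{ε,δ}`
minus `C` is exactly `|t| - B`, and its first branch `ε|t| - C` never exceeds
`max(0, |t| - B)` because `C ≥ εδ`. The identity then is `a - max(0, a - C) = min(a, C)`.
-/

lemma pen_eq_max {α : ℝ} (β t : ℝ) (hα : α ≤ 1) :
    pen α β t = max (α * |t|) (|t| - β * (1 - α)) := by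
  unfold pen
  split_ifs with h
  · rw [max_eq_left]; nlinarith
  · rw [max_eq_right]; nlinarith [le_of_not_ge h]

lemma convexOn_pen {α : ℝ} (β : ℝ) (hα0 : 0 ≤ α) (hα1 : α ≤ 1) :
    ConvexOn ℝ Set.univ (pen α β) := by
  have habs : ConvexOn ℝ Set.univ (fun t : ℝ => |t|) := convexOn_univ_norm
  have hscaled : ConvexOn ℝ Set.univ (fun t : ℝ => α * |t|) := habs.smul hα0
  have hshifted : ConvexOn ℝ Set.univ (fun t : ℝ => |t| - β * (1 - α)) :=
    habs.sub (concaveOn_const _ convex_univ)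
  rw [show pen α β = (fun t => α * |t|) ⊔ fun t => |t| - β * (1 - α) from
    funext (pen_eq_max β · hα1)]
  exact hscaled.sup hshifted

lemma pen_zero_eq_max_pen_sub {ε δ C : ℝ} (t : ℝ) (hε0 : 0 ≤ ε) (hε1 : ε ≤ 1)
    (hC : ε * δ ≤ C) :
    pen 0 (C + δ - ε * δ) t = max 0 (pen ε δ t - C) := by
  have hfirst : ε * |t| - C ≤ max 0 (|t| - (C + δ - ε * δ)) := by
    rcases le_total |t| δ with ht | ht
    · exact le_max_of_le_left (by nlinarith)
    · exact le_max_of_le_right (by nlinarith)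
  rw [pen_eq_max _ _ zero_le_one, pen_eq_max _ _ hε1, zero_mul, sub_zero, mul_one,
    ← max_sub_sub_right, show |t| - δ * (1 - ε) - C = |t| - (C + δ - ε * δ) by ring,
    max_left_comm]
  exact (max_eq_right hfirst).symm

lemma sub_max_zero_sub {G : Type*} [AddCommGroup G] [LinearOrder G] [IsOrderedAddMonoid G]
    (a c : G) : a - max 0 (a - c) = min a c := by
  rcases le_total a c with h | h <;> simp [h]

theorem truncated_pen_dc_general (ε δ C : ℝ) (hε0 : 0 ≤ ε) (hε1 : ε ≤ 1)
    (hC : ε * δ ≤ C) :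
    (∀ t : ℝ, pen ε δ t - pen 0 (C + δ - ε * δ) t = min (pen ε δ t) C) ∧
    ConvexOn ℝ Set.univ (pen ε δ) ∧ ConvexOn ℝ Set.univ (pen 0 (C + δ - ε * δ)) := by
  refine ⟨fun t => ?_, convexOn_pen δ hε0 hε1, convexOn_pen _ le_rfl zero_le_one⟩
  rw [pen_zero_eq_max_pen_sub t hε0 hε1 hC, sub_max_zero_sub]

/-- Difference-of-convex decomposition of the truncated penalty: for
`0 ≤ ε ≤ 1`, `δ ≥ 0`, `C ≥ εδ`, we have
`r_{ε,δ}(t) − r_{0, C+δ−εδ}(t) = min(r_{ε,δ}(t), C)`; in particular the truncated penalty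
`min(r_{ε,δ}, C)` is a difference of the two convex functions `r_{ε,δ}` and `r_{0,C+δ−εδ}`. -/
theorem truncated_pen_dc (ε δ C : ℝ) (hε0 : 0 ≤ ε) (hε1 : ε ≤ 1) (hδ : 0 ≤ δ)
    (hC : ε * δ ≤ C) :
    (∀ t : ℝ, pen ε δ t - pen 0 (C + δ - ε * δ) t = min (pen ε δ t) C) ∧
    ConvexOn ℝ Set.univ (pen ε δ) ∧ ConvexOn ℝ Set.univ (pen 0 (C + δ - ε * δ)) :=
  truncated_pen_dc_general ε δ C hε0 hε1 hC
end

section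
/- (Convex conjugate of the weighted penalty.) Let 0 ≤ α ≤ 1, β ≥ 0 and ω > 0. For t* ∈ ℝ consider the function t ↦ t*·t − ω·r_{α,β}(t) on ℝ. (i) If |t*| ≤ ω, then its supremum over t ∈ ℝ equals max(0, β·|t*| − ω·α·β), and this supremum is attained. (ii) If |t*| > ω, then the function is unbounded above. -/
open Filter Set

lemma Set.range_abs_mul_sub_of_even {h : ℝ → ℝ} (h_even : Function.Even h) (s : ℝ) :
    range (fun t => |s| * t - h t) = range (fun t => s * t - h t) := by
  rcases abs_choice s with hs | hs
  · rw [hs]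
  · rw [hs, ← neg_surjective.range_comp]
    congr 1
    ext t
    simp [h_even t]

section Pen

variable {α β : ℝ}

lemma pen_even : Function.Even (pen α β) := fun t => by simp [pen]

lemma pen_of_abs_le {t : ℝ} (ht : |t| ≤ β) : pen α β t = α * |t| := if_pos ht

lemma pen_of_lt_abs {t : ℝ} (ht : β < |t|) : pen α β t = |t| - β * (1 - α) :=
  if_neg ht.not_ge

lemma pen_le_abs (hα : α ≤ 1) (hβ : 0 ≤ β) (t : ℝ) : pen α β t ≤ |t| := by
  rcases le_or_gt |t| β with ht | ht
  · rw [pen_of_abs_le ht]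
    exact mul_le_of_le_one_left (abs_nonneg t) hα
  · rw [pen_of_lt_abs ht]
    nlinarith

variable {ω s : ℝ}

lemma mul_sub_pen_le (hs : 0 ≤ s) (hsω : s ≤ ω) (t : ℝ) :
    s * t - ω * pen α β t ≤ max 0 (β * s - ω * α * β) := by
  have hst : s * t ≤ s * |t| := mul_le_mul_of_nonneg_left (le_abs_self t) hs
  rcases le_or_gt |t| β with ht | ht
  · rw [pen_of_abs_le ht]
    rcases le_total (s - ω * α) 0 with hslope | hslope
    · exact le_max_of_le_left (by nlinarith [abs_nonneg t])
    · exact le_max_of_le_right (by nlinarith)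
  · rw [pen_of_lt_abs ht]
    exact le_max_of_le_right (by nlinarith)

lemma isGreatest_range_mul_sub_pen (hβ : 0 ≤ β) (hs : 0 ≤ s) (hsω : s ≤ ω) :
    IsGreatest (range fun t => s * t - ω * pen α β t) (max 0 (β * s - ω * α * β)) := by
  refine ⟨?_, forall_mem_range.2 (mul_sub_pen_le hs hsω)⟩
  rcases max_choice 0 (β * s - ω * α * β) with h | h <;> rw [h]
  · exact ⟨0, by simp [pen_of_abs_le, hβ]⟩
  · refine ⟨β, ?_⟩
    simp only [pen_of_abs_le (abs_of_nonneg hβ).le, abs_of_nonneg hβ]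
    ring

lemma tendsto_mul_sub_pen_atTop (hα : α ≤ 1) (hβ : 0 ≤ β) (hω : 0 ≤ ω) (hsω : ω < s) :
    Tendsto (fun t => s * t - ω * pen α β t) atTop atTop := by
  refine tendsto_atTop_mono' atTop ?_ (tendsto_id.const_mul_atTop (sub_pos.2 hsω))
  filter_upwards [eventually_ge_atTop 0] with t ht
  have hpen : ω * pen α β t ≤ ω * t := by
    simpa [abs_of_nonneg ht] using mul_le_mul_of_nonneg_left (pen_le_abs hα hβ t) hω
  simp only [id]
  linarith

end Pen

theorem pen_conjugate_general (α β ω : ℝ) (hα1 : α ≤ 1) (hβ : 0 ≤ β) (hω : 0 < ω)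
    (tstar : ℝ) :
    (|tstar| ≤ ω →
      IsGreatest {y : ℝ | ∃ t : ℝ, y = tstar * t - ω * pen α β t}
        (max 0 (β * |tstar| - ω * α * β))) ∧
    (ω < |tstar| → ¬ BddAbove {y : ℝ | ∃ t : ℝ, y = tstar * t - ω * pen α β t}) := by
  have hvalues : {y : ℝ | ∃ t : ℝ, y = tstar * t - ω * pen α β t} =
      range fun t => |tstar| * t - ω * pen α β t := by
    rw [range_abs_mul_sub_of_even fun t => by simp only [pen_even t]]
    ext y
    simp [eq_comm]
  rw [hvalues]
  exact ⟨isGreatest_range_mul_sub_pen hβ (abs_nonneg tstar),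
    fun h => not_bddAbove_of_tendsto_atTop (tendsto_mul_sub_pen_atTop hα1 hβ hω.le h)⟩

/-- Convex conjugate of the weighted penalty `ω·r_{α,β}`.
(i) If `|t*| ≤ ω`, the supremum of `t ↦ t*·t − ω·r_{α,β}(t)` equals
`max(0, β|t*| − ωαβ)` and is attained; (ii) if `|t*| > ω`, the function is unbounded above. -/
theorem pen_conjugate (α β ω : ℝ) (hα0 : 0 ≤ α) (hα1 : α ≤ 1) (hβ : 0 ≤ β) (hω : 0 < ω)
    (tstar : ℝ) :
    (|tstar| ≤ ω →
      IsGreatest {y : ℝ | ∃ t : ℝ, y = tstar * t - ω * pen α β t}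
        (max 0 (β * |tstar| - ω * α * β))) ∧
    (ω < |tstar| → ¬ BddAbove {y : ℝ | ∃ t : ℝ, y = tstar * t - ω * pen α β t}) :=
  pen_conjugate_general α β ω hα1 hβ hω tstar
end

section
/- (Proximal map of the conjugate penalty.) Let 0 ≤ α ≤ 1, β ≥ 0, ω > 0, σ > 0, and t* ∈ ℝ. Define t' = t* if |t*| ≤ α·ω, and t' = sign(t*)·max(α·ω, |t*| − β·σ) otherwise. Then clamp(−ω, ω, t') is the unique minimizer over y ∈ [−ω, ω] of the strictly convex function y ↦ (1/2)·(y − t*)² + σ·β·max(0, |y| − ω·α). -/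
/-- `clamp a b t` clamps `t` to the interval `[a, b]` (for `a ≤ b`). -/
noncomputable def clamp (a b t : ℝ) : ℝ := max a (min b t)

/-!
Write `p y = σβ·max(0, |y| - ωα)`, `x = clamp(-ω, ω, t')` and `g = t* - t'`. Then `g` is a
subgradient of `p` at `x`: this is the Fenchel–Young equality `g·x = p x + ωα·|g|` with
`|g| ≤ σβ`, the conjugate of `p` being `g ↦ ωα·|g|` on `[-σβ, σβ]`; it is checked case by case
for `t* ≥ 0` and transported to `t* ≤ 0` by the symmetry `y ↦ -y`. Moreover `x - t* + g = x - t'`,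
and `x` is the projection of `t'` onto `[-ω, ω]`, so `(x - t')(y - x) ≥ 0` there. Expanding the
square then gives `f y - f x ≥ ½ (y - x)²` for the objective `f`.
-/

open Set

section Subgradient

variable {E : Type*} [NormedAddCommGroup E] [InnerProductSpace ℝ E]

def IsSubgradient (f : E → ℝ) (x g : E) : Prop :=
  ∀ y, f x + inner ℝ g (y - x) ≤ f y

theorem IsSubgradient.half_sq_dist_add_lt {p : E → ℝ} {S : Set E} {t x g y : E}
    (hsub : IsSubgradient p x g) (hvar : ∀ z ∈ S, 0 ≤ inner ℝ (x - t + g) (z - x))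
    (hy : y ∈ S) (hne : y ≠ x) :
    (1 / 2) * ‖x - t‖ ^ 2 + p x < (1 / 2) * ‖y - t‖ ^ 2 + p y := by
  have hexpand : ‖y - t‖ ^ 2 = ‖x - t‖ ^ 2 + 2 * inner ℝ (x - t) (y - x) + ‖y - x‖ ^ 2 := by
    rw [← norm_add_sq_real, sub_add_sub_cancel']
  have hpos : 0 < ‖y - x‖ := norm_pos_iff.mpr (sub_ne_zero.mpr hne)
  have hpy := hsub y
  have hxy := hvar y hy
  rw [inner_add_left] at hxy
  nlinarith

end Subgradient

section Clamp

theorem clamp_mem_Icc {a b : ℝ} (h : a ≤ b) (t : ℝ) : clamp a b t ∈ Icc a b :=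
  ⟨le_max_left _ _, max_le h (min_le_left _ _)⟩

theorem clamp_of_mem {a b t : ℝ} (h : t ∈ Icc a b) : clamp a b t = t := by
  rw [clamp, min_eq_right h.2, max_eq_right h.1]

theorem clamp_neg {b : ℝ} (hb : 0 ≤ b) (t : ℝ) : clamp (-b) b (-t) = -clamp (-b) b t := by
  grind [clamp]

theorem clamp_sub_mul_sub_clamp_nonneg {a b y : ℝ} (t : ℝ) (hy : y ∈ Icc a b) :
    0 ≤ (clamp a b t - t) * (y - clamp a b t) := by
  obtain ⟨hay, hyb⟩ := hy
  rcases le_total t a with hta | hat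
  · rw [clamp, min_eq_right (hta.trans (hay.trans hyb)), max_eq_left hta]
    exact mul_nonneg (by linarith) (by linarith)
  rcases le_total t b with htb | hbt
  · rw [clamp_of_mem ⟨hat, htb⟩, sub_self, zero_mul]
  · rw [clamp, min_eq_left hbt, max_eq_right (hay.trans hyb)]
    exact mul_nonneg_of_nonpos_of_nonpos (by linarith) (by linarith)

end Clamp

section EpsInsensitive

def epsInsensitive (c y : ℝ) : ℝ := max 0 (|y| - c)

/-- The proximal map of `s · epsInsensitive c`. -/
noncomputable def epsInsensitiveProx (c s t : ℝ) : ℝ :=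
  if |t| ≤ c then t else Real.sign t * max c (|t| - s)

theorem epsInsensitive_neg (c y : ℝ) : epsInsensitive c (-y) = epsInsensitive c y := by
  rw [epsInsensitive, abs_neg, epsInsensitive]

theorem epsInsensitiveProx_neg (c s t : ℝ) :
    epsInsensitiveProx c s (-t) = -epsInsensitiveProx c s t := by
  simp only [epsInsensitiveProx, abs_neg, Real.sign_neg, neg_mul]
  split_ifs <;> rfl

theorem epsInsensitiveProx_of_nonneg {c s t : ℝ} (hc : 0 ≤ c) (ht : 0 ≤ t) :
    epsInsensitiveProx c s t = if t ≤ c then t else max c (t - s) := by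
  simp only [epsInsensitiveProx, abs_of_nonneg ht]
  split_ifs with h
  · rfl
  · rw [Real.sign_of_pos (by linarith), one_mul]

theorem isSubgradient_epsInsensitive {c s g x : ℝ} (hg : |g| ≤ s)
    (hfy : g * x = s * epsInsensitive c x + c * |g|) :
    IsSubgradient (fun y => s * epsInsensitive c y) x g := by
  intro y
  have hyoung : g * y - c * |g| ≤ s * epsInsensitive c y := by
    have h1 : g * y ≤ |g| * |y| := by rw [← abs_mul]; exact le_abs_self _
    have h2 : |g| * (|y| - c) ≤ |g| * epsInsensitive c y :=
      mul_le_mul_of_nonneg_left (le_max_right _ _) (abs_nonneg g)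
    have h3 : |g| * epsInsensitive c y ≤ s * epsInsensitive c y :=
      mul_le_mul_of_nonneg_right hg (le_max_left _ _)
    linarith
  rw [Real.inner_apply]
  linarith

variable {c ω s : ℝ}

theorem fenchelYoung_clamp_epsInsensitiveProx_of_nonneg (hc : 0 ≤ c) (hcω : c ≤ ω) (hs : 0 ≤ s)
    {t : ℝ} (ht : 0 ≤ t) :
    let u := epsInsensitiveProx c s t
    let x := clamp (-ω) ω u
    |t - u| ≤ s ∧ (t - u) * x = s * epsInsensitive c x + c * |t - u| := by
  simp only [epsInsensitiveProx_of_nonneg hc ht, epsInsensitive]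
  rcases le_or_gt t c with htc | hct
  · rw [if_pos htc, clamp_of_mem ⟨by linarith, by linarith⟩, sub_self, abs_zero,
      abs_of_nonneg ht, max_eq_left (by linarith)]
    exact ⟨hs, by ring⟩
  rw [if_neg (not_le.mpr hct)]
  rcases le_or_gt (t - s) c with hts | hts
  · rw [max_eq_left hts, clamp_of_mem ⟨by linarith, hcω⟩, abs_of_pos (by linarith : 0 < t - c),
      abs_of_nonneg hc, sub_self, max_self]
    exact ⟨by linarith, by ring⟩
  rw [max_eq_right hts.le, sub_sub_cancel, abs_of_nonneg hs]
  rcases le_or_gt (t - s) ω with htω | htω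
  · rw [clamp_of_mem ⟨by linarith, htω⟩, abs_of_pos (by linarith), max_eq_right (by linarith)]
    exact ⟨le_rfl, by ring⟩
  · rw [clamp, min_eq_left htω.le, max_eq_right (by linarith), abs_of_nonneg (by linarith),
      max_eq_right (by linarith)]
    exact ⟨le_rfl, by ring⟩

theorem isSubgradient_clamp_epsInsensitiveProx (hc : 0 ≤ c) (hcω : c ≤ ω) (hs : 0 ≤ s) (t : ℝ) :
    IsSubgradient (fun y => s * epsInsensitive c y)
      (clamp (-ω) ω (epsInsensitiveProx c s t)) (t - epsInsensitiveProx c s t) := by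
  set u := epsInsensitiveProx c s t
  set x := clamp (-ω) ω u
  rcases le_total 0 t with ht | ht
  · obtain ⟨hg, hfy⟩ := fenchelYoung_clamp_epsInsensitiveProx_of_nonneg hc hcω hs ht
    exact isSubgradient_epsInsensitive hg hfy
  obtain ⟨hg, hfy⟩ := fenchelYoung_clamp_epsInsensitiveProx_of_nonneg hc hcω hs (neg_nonneg.mpr ht)
  simp only [epsInsensitiveProx_neg, clamp_neg (hc.trans hcω), epsInsensitive_neg, neg_sub_neg,
    abs_sub_comm _ t] at hg hfy
  refine isSubgradient_epsInsensitive hg ?_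
  calc (t - u) * x = (u - t) * -x := by ring
    _ = _ := hfy

end EpsInsensitive

/-- Proximal map of the conjugate penalty.  With
`t' = t*` if `|t*| ≤ αω` and `t' = sign(t*)·max(αω, |t*| − βσ)` otherwise,
`clamp(−ω, ω, t')` is the unique minimizer over `y ∈ [−ω, ω]` of the strictly convex
function `y ↦ ½(y − t*)² + σβ·max(0, |y| − ωα)`. -/
theorem prox_of_conjugate_pen (α β ω σ tstar : ℝ)
    (hα0 : 0 ≤ α) (hα1 : α ≤ 1) (hβ : 0 ≤ β) (hω : 0 < ω) (hσ : 0 < σ) :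
    let t' : ℝ := if |tstar| ≤ α * ω then tstar
      else Real.sign tstar * max (α * ω) (|tstar| - β * σ)
    clamp (-ω) ω t' ∈ Set.Icc (-ω) ω ∧
      ∀ y ∈ Set.Icc (-ω) ω, y ≠ clamp (-ω) ω t' →
        (1 / 2) * (clamp (-ω) ω t' - tstar) ^ 2
            + σ * β * max 0 (|clamp (-ω) ω t'| - ω * α) <
          (1 / 2) * (y - tstar) ^ 2 + σ * β * max 0 (|y| - ω * α) := by
  intro t'
  have hc : 0 ≤ α * ω := mul_nonneg hα0 hω.le
  have hcω : α * ω ≤ ω := mul_le_of_le_one_left hω.le hα1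
  have hs : 0 ≤ β * σ := mul_nonneg hβ hσ.le
  refine ⟨clamp_mem_Icc (by linarith) t', fun y hy hne => ?_⟩
  have hsub := isSubgradient_clamp_epsInsensitiveProx hc hcω hs tstar
  have hvar : ∀ z ∈ Icc (-ω) ω,
      0 ≤ inner ℝ (clamp (-ω) ω t' - tstar + (tstar - t')) (z - clamp (-ω) ω t') := by
    intro z hz
    rw [Real.inner_apply, sub_add_sub_cancel]
    exact clamp_sub_mul_sub_clamp_nonneg t' hz
  have hlt := hsub.half_sq_dist_add_lt hvar hy hne
  simp only [Real.norm_eq_abs, sq_abs, epsInsensitive] at hlt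
  rwa [mul_comm σ β, mul_comm ω α]
end
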